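/- arXiv:1110.4424 — 2 statements merged into one kernel-verified Lean document; each statement's English description precedes it below -/
import Mathlib

section
/- The orthogonal group O(V) of a finite-dimensional Euclidean space V acts simply transitively on the set of maximal pointed convex cones in V. -/
open Set

noncomputable section

def IsCone {V : Type*} [AddCommGroup V] [Module ℝ V] (C : Set V) : Prop :=
  (0 : V) ∈ C ∧ ∀ r : ℝ, 0 ≤ r → ∀ v ∈ C, r • v ∈ C

def IsConvexCone {V : Type*} [AddCommGroup V] [Module ℝ V] (C : Set V) : Prop :=
  IsCone C ∧ ∀ u ∈ C, ∀ v ∈ C, u + v ∈ C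

def IsMaxPointedCone {V : Type*} [AddCommGroup V] [Module ℝ V] (D : Set V) : Prop :=
  IsConvexCone D ∧ D ∩ (-D) = {0} ∧ D ∪ (-D) = Set.univ

def hatCone {V : Type*} [AddCommGroup V] [Module ℝ V] (X : Set V) : Set V :=
  {0} ∪ {v | ∃ r : ℝ, 0 ≤ r ∧ ∃ x ∈ X, v = r • x}

def sphereN (n : ℕ) : Set (EuclideanSpace ℝ (Fin (n + 1))) := Metric.sphere 0 1

def PhiPlus (n : ℕ) : Set (EuclideanSpace ℝ (Fin (n + 1))) :=
  {x | x ∈ sphereN n ∧ ∃ m : Fin (n + 1), 0 < x m ∧ ∀ i, m < i → x i = 0}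

def PhiMinus (n : ℕ) : Set (EuclideanSpace ℝ (Fin (n + 1))) := {x | -x ∈ PhiPlus n}

def Ln (n : ℕ) : Set (Set (EuclideanSpace ℝ (Fin (n + 1)))) :=
  {X | ∃ D, IsMaxPointedCone D ∧ X = D ∩ PhiPlus n}

/-!
A maximal pointed cone `D` in a nontrivial space is convex with nonempty interior not containing
`0`, so Hahn–Banach gives a unit vector `u` with `⟪u, v⟫ ≥ 0` on `D`; it is unique, and
`D = {v | 0 < ⟪u, v⟫} ∪ (D ∩ uᗮ)` where `D ∩ uᗮ` is again a maximal pointed cone in `uᗮ`.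
An isometry maps `D₁` onto `D₂` iff it maps `u₁` to `u₂` and `D₁ ∩ u₁ᗮ` onto `D₂ ∩ u₂ᗮ`, so
existence and uniqueness both follow by induction on the dimension.
-/

open Module RealInnerProductSpace Topology

namespace IsMaxPointedCone

variable {E F : Type*} [AddCommGroup E] [Module ℝ E] [AddCommGroup F] [Module ℝ F] {D : Set E}

lemma zero_mem (h : IsMaxPointedCone D) : (0 : E) ∈ D := h.1.1.1

lemma convex (h : IsMaxPointedCone D) : Convex ℝ D := fun _ hx _ hy a b ha hb _ ↦
  h.1.2 _ (h.1.1.2 a ha _ hx) _ (h.1.1.2 b hb _ hy)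

lemma mem_or_neg_mem (h : IsMaxPointedCone D) (v : E) : v ∈ D ∨ -v ∈ D := by
  simpa using h.2.2.ge (mem_univ v)

lemma eq_zero_of_mem_of_neg_mem (h : IsMaxPointedCone D) {v : E} (hv : v ∈ D) (hv' : -v ∈ D) :
    v = 0 :=
  h.2.1.le ⟨hv, hv'⟩

lemma span_eq_top (h : IsMaxPointedCone D) : Submodule.span ℝ D = ⊤ :=
  eq_top_iff.2 fun v _ ↦ (h.mem_or_neg_mem v).elim (fun hv ↦ Submodule.subset_span hv)
    fun hv ↦ neg_neg v ▸ Submodule.neg_mem _ (Submodule.subset_span hv)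

lemma preimage (h : IsMaxPointedCone D) (f : F →ₗ[ℝ] E) (hf : Function.Injective f) :
    IsMaxPointedCone (f ⁻¹' D) := by
  refine ⟨⟨⟨by simpa using h.zero_mem, fun r hr v hv ↦ ?_⟩, fun u hu v hv ↦ ?_⟩, ?_, ?_⟩
  · simpa using h.1.1.2 r hr _ hv
  · simpa using h.1.2 _ hu _ hv
  · have h0 : f 0 ∈ D ∧ -f 0 ∈ D := by simpa using h.zero_mem
    refine Set.eq_singleton_iff_unique_mem.2 ⟨by simpa using h0, fun v hv ↦ hf ?_⟩
    simpa using h.eq_zero_of_mem_of_neg_mem hv.1 (by simpa using hv.2)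
  · exact Set.eq_univ_of_forall fun v ↦ by simpa using h.mem_or_neg_mem (f v)

end IsMaxPointedCone

def IsUnitNormal {V : Type*} [NormedAddCommGroup V] [InnerProductSpace ℝ V] (D : Set V) (u : V) :
    Prop :=
  ‖u‖ = 1 ∧ ∀ v ∈ D, 0 ≤ ⟪u, v⟫

namespace IsMaxPointedCone

variable {V : Type*} [NormedAddCommGroup V] [InnerProductSpace ℝ V] {D : Set V}

lemma mem_of_inner_pos (h : IsMaxPointedCone D) {u v : V} (hu : ∀ w ∈ D, 0 ≤ ⟪u, w⟫)
    (hv : 0 < ⟪u, v⟫) : v ∈ D :=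
  (h.mem_or_neg_mem v).resolve_right fun hv' ↦ by
    linarith [inner_neg_right (𝕜 := ℝ) u v ▸ hu _ hv']

lemma zero_notMem_interior [Nontrivial V] (h : IsMaxPointedCone D) : (0 : V) ∉ interior D := by
  intro h0
  have hD : D ∈ 𝓝 (0 : V) := mem_interior_iff_mem_nhds.1 h0
  have : ({0} : Set V) ∈ 𝓝 (0 : V) := h.2.1 ▸ Filter.inter_mem hD (neg_mem_nhds_zero V hD)
  exact not_isOpen_singleton (0 : V) (isOpen_iff_mem_nhds.2 (by simpa))

lemma interior_nonempty [FiniteDimensional ℝ V] (h : IsMaxPointedCone D) :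
    (interior D).Nonempty := by
  rw [h.convex.interior_nonempty_iff_affineSpan_eq_top,
    AffineSubspace.affineSpan_eq_top_iff_vectorSpan_eq_top_of_nonempty ℝ V V ⟨0, h.zero_mem⟩,
    vectorSpan_eq_span_vsub_set_right ℝ h.zero_mem]
  simpa using h.span_eq_top

lemma exists_isUnitNormal [FiniteDimensional ℝ V] [Nontrivial V] (h : IsMaxPointedCone D) :
    ∃ u, IsUnitNormal D u := by
  obtain ⟨f, hf0, hf⟩ := geometric_hahn_banach_of_nonempty_interior_point h.convex
    h.zero_notMem_interior h.interior_nonempty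
  set w := (InnerProductSpace.toDual ℝ V).symm f
  have hw : w ≠ 0 := by simpa [w] using hf0
  refine ⟨-(‖w‖⁻¹ • w), by simp [norm_smul, hw], fun v hv ↦ ?_⟩
  have : ⟪w, v⟫ ≤ 0 := by simpa [w] using hf v hv
  rw [inner_neg_left, real_inner_smul_left]
  have : 0 ≤ ‖w‖⁻¹ := by positivity
  nlinarith

lemma isUnitNormal_unique (h : IsMaxPointedCone D) {u u' : V} (hu : IsUnitNormal D u)
    (hu' : IsUnitNormal D u') : u = u' := by
  set c := ⟪u, u'⟫
  suffices hc : c = 1 from (inner_eq_one_iff_of_norm_eq_one hu.1 hu'.1).1 hc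
  by_contra hc
  have hc1 : c < 1 := (real_inner_le_one_of_norm_eq_one hu.1 hu'.1).lt_of_ne hc
  have hc2 : -1 ≤ c := neg_one_le_real_inner_of_norm_eq_one hu.1 hu'.1
  have hc' : ⟪u', u⟫ = c := real_inner_comm _ _
  -- for `-1 ≤ c < 1` this vector lies on the positive side of `u` and the negative side of `u'`
  have hmem : u - ((1 + c) / 2) • u' ∈ D := by
    refine h.mem_of_inner_pos hu.2 ?_
    rw [inner_sub_right, real_inner_smul_right, real_inner_self_eq_norm_sq, hu.1]
    nlinarith
  have := hu'.2 _ hmem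
  rw [inner_sub_right, real_inner_smul_right, real_inner_self_eq_norm_sq, hu'.1, hc'] at this
  linarith

end IsMaxPointedCone

namespace LinearIsometryEquiv

variable {𝕜 V W : Type*} [RCLike 𝕜] [NormedAddCommGroup V] [InnerProductSpace 𝕜 V]
  [NormedAddCommGroup W] [InnerProductSpace 𝕜 W] {K : Submodule 𝕜 V} {L : Submodule 𝕜 W}

def restrictOrthogonal (T : V ≃ₗᵢ[𝕜] W) (h : K.map (T.toLinearEquiv : V →ₗ[𝕜] W) = L) :
    Kᗮ ≃ₗᵢ[𝕜] Lᗮ :=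
  (submoduleMap Kᗮ T).trans (ofEq _ _ (h ▸ Submodule.map_orthogonal_equiv K T))

@[simp] lemma coe_restrictOrthogonal_apply (T : V ≃ₗᵢ[𝕜] W)
    (h : K.map (T.toLinearEquiv : V →ₗ[𝕜] W) = L) (v : Kᗮ) :
    (restrictOrthogonal T h v : W) = T v :=
  rfl

def orthogonalSum [K.HasOrthogonalProjection] [L.HasOrthogonalProjection] (A : K ≃ₗᵢ[𝕜] L)
    (S : Kᗮ ≃ₗᵢ[𝕜] Lᗮ) : V ≃ₗᵢ[𝕜] W :=
  K.orthogonalDecomposition.trans ((A.withLpProdCongr 2 S).trans L.orthogonalDecomposition.symm)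

variable [K.HasOrthogonalProjection] [L.HasOrthogonalProjection] (A : K ≃ₗᵢ[𝕜] L)
  (S : Kᗮ ≃ₗᵢ[𝕜] Lᗮ)

@[simp] lemma orthogonalSum_apply_coe (v : K) : orthogonalSum A S v = A v := by
  simp [orthogonalSum, Submodule.orthogonalProjectionOnto_orthogonal_apply_eq_zero v.2]

@[simp] lemma orthogonalSum_apply_coe_orthogonal (v : Kᗮ) : orthogonalSum A S v = S v := by
  simp [orthogonalSum, Submodule.orthogonalProjectionOnto_eq_zero_iff.2 v.2]

end LinearIsometryEquiv

lemma LinearIsometryEquiv.image_eq_iff {R V W : Type*} [Semiring R] [SeminormedAddCommGroup V]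
    [SeminormedAddCommGroup W] [Module R V] [Module R W] (T : V ≃ₗᵢ[R] W) {A : Set V}
    {B : Set W} : T '' A = B ↔ ∀ v, T v ∈ B ↔ v ∈ A := by
  simp only [Set.ext_iff, T.surjective.forall, T.injective.mem_set_image, iff_comm]

section IsometricCones

variable {V W : Type*} [NormedAddCommGroup V] [InnerProductSpace ℝ V]
  [NormedAddCommGroup W] [InnerProductSpace ℝ W] {D₁ : Set V} {D₂ : Set W} {u₁ : V} {u₂ : W}

lemma IsUnitNormal.image (hu : IsUnitNormal D₁ u₁) (T : V ≃ₗᵢ[ℝ] W) :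
    IsUnitNormal (T '' D₁) (T u₁) := by
  refine ⟨by rw [T.norm_map, hu.1], ?_⟩
  rintro _ ⟨v, hv, rfl⟩
  rw [T.inner_map_map]
  exact hu.2 v hv

lemma IsMaxPointedCone.image_eq_of_isUnitNormal (h₁ : IsMaxPointedCone D₁)
    (h₂ : IsMaxPointedCone D₂) (hu₁ : IsUnitNormal D₁ u₁) (hu₂ : IsUnitNormal D₂ u₂)
    (T : V ≃ₗᵢ[ℝ] W) (hT : T u₁ = u₂) (hperp : ∀ v : (ℝ ∙ u₁)ᗮ, T v ∈ D₂ ↔ (v : V) ∈ D₁) :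
    T '' D₁ = D₂ := by
  have hinner (v : V) : ⟪u₂, T v⟫ = ⟪u₁, v⟫ := hT ▸ T.inner_map_map u₁ v
  refine T.image_eq_iff.2 fun v ↦ ?_
  rcases lt_trichotomy ⟪u₁, v⟫ 0 with hneg | hzero | hpos
  · exact iff_of_false (fun hv ↦ ((hu₂.2 _ hv).trans_eq (hinner v)).not_gt hneg)
      fun hv ↦ (hu₁.2 v hv).not_gt hneg
  · exact hperp ⟨v, Submodule.mem_orthogonal_singleton_iff_inner_right.2 hzero⟩
  · exact iff_of_true (h₂.mem_of_inner_pos hu₂.2 (hinner v ▸ hpos)) (h₁.mem_of_inner_pos hu₁.2 hpos)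

open LinearIsometryEquiv in
lemma IsMaxPointedCone.existsUnique_image_eq_of_orthogonal (h₁ : IsMaxPointedCone D₁)
    (h₂ : IsMaxPointedCone D₂) (hu₁ : IsUnitNormal D₁ u₁) (hu₂ : IsUnitNormal D₂ u₂)
    (hS : ∃! S : (ℝ ∙ u₁)ᗮ ≃ₗᵢ[ℝ] (ℝ ∙ u₂)ᗮ, S '' ((↑) ⁻¹' D₁) = (↑) ⁻¹' D₂) :
    ∃! T : V ≃ₗᵢ[ℝ] W, T '' D₁ = D₂ := by
  obtain ⟨S, hS, hS_unique⟩ := hS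
  set T := orthogonalSum ((toSpanUnitSingleton u₁ hu₁.1).symm.trans
    (toSpanUnitSingleton u₂ hu₂.1)) S
  have hTu : T u₁ = u₂ := by
    refine (orthogonalSum_apply_coe _ S ⟨u₁, Submodule.mem_span_singleton_self u₁⟩).trans ?_
    have h1 : (toSpanUnitSingleton u₁ hu₁.1).symm ⟨u₁, Submodule.mem_span_singleton_self u₁⟩ =
        (1 : ℝ) :=
      (toSpanUnitSingleton u₁ hu₁.1).symm_apply_eq.2 (by ext; simp)
    simp [h1]
  refine ⟨T, h₁.image_eq_of_isUnitNormal h₂ hu₁ hu₂ T hTu fun v ↦ ?_, fun T' hT' ↦ ?_⟩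
  · rw [orthogonalSum_apply_coe_orthogonal]
    exact S.image_eq_iff.1 hS v
  have hT'u : T' u₁ = u₂ := h₂.isUnitNormal_unique (hT' ▸ hu₁.image T') hu₂
  have hmap : (ℝ ∙ u₁).map (T'.toLinearEquiv : V →ₗ[ℝ] W) = ℝ ∙ u₂ := by
    rw [Submodule.map_span, Set.image_singleton, ← hT'u]
    rfl
  have hS' : T'.restrictOrthogonal hmap = S :=
    hS_unique _ ((T'.restrictOrthogonal hmap).image_eq_iff.2 fun v ↦ T'.image_eq_iff.1 hT' v)
  refine LinearMap.ext_on_codisjoint (Submodule.isCompl_orthogonal (ℝ ∙ u₁)).codisjoint ?_ ?_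
  · intro v hv
    obtain ⟨c, rfl⟩ := Submodule.mem_span_singleton.1 hv
    simp [hT'u, hTu]
  · intro v hv
    rw [← coe_restrictOrthogonal_apply T' hmap ⟨v, hv⟩, hS']
    exact (orthogonalSum_apply_coe_orthogonal _ S ⟨v, hv⟩).symm

end IsometricCones

universe u

theorem IsMaxPointedCone.existsUnique_linearIsometryEquiv_image_eq {V W : Type u}
    [NormedAddCommGroup V] [InnerProductSpace ℝ V] [FiniteDimensional ℝ V]
    [NormedAddCommGroup W] [InnerProductSpace ℝ W] [FiniteDimensional ℝ W]
    (hdim : finrank ℝ V = finrank ℝ W) {D₁ : Set V} {D₂ : Set W} (h₁ : IsMaxPointedCone D₁)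
    (h₂ : IsMaxPointedCone D₂) : ∃! T : V ≃ₗᵢ[ℝ] W, T '' D₁ = D₂ := by
  induction hn : finrank ℝ V generalizing V W with
  | zero =>
    have : Subsingleton V := finrank_zero_iff.1 hn
    have : Subsingleton W := finrank_zero_iff.1 (hdim ▸ hn)
    refine ⟨⟨LinearEquiv.ofSubsingleton V W, fun v ↦ by simp [Subsingleton.elim v 0]⟩, ?_,
      fun _ _ ↦ LinearIsometryEquiv.ext fun _ ↦ Subsingleton.elim _ _⟩
    exact (Set.Nonempty.eq_univ ⟨_, mem_image_of_mem _ h₁.zero_mem⟩).trans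
      (Set.Nonempty.eq_univ ⟨0, h₂.zero_mem⟩).symm
  | succ n ih =>
    have : Fact (finrank ℝ V = n + 1) := ⟨hn⟩
    have : Fact (finrank ℝ W = n + 1) := ⟨hdim ▸ hn⟩
    have : Nontrivial V := nontrivial_of_finrank_eq_succ hn
    have : Nontrivial W := nontrivial_of_finrank_eq_succ (hdim ▸ hn)
    obtain ⟨u₁, hu₁⟩ := h₁.exists_isUnitNormal
    obtain ⟨u₂, hu₂⟩ := h₂.exists_isUnitNormal
    have hu₁0 : u₁ ≠ 0 := ne_zero_of_norm_ne_zero (hu₁.1 ▸ one_ne_zero)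
    have hu₂0 : u₂ ≠ 0 := ne_zero_of_norm_ne_zero (hu₂.1 ▸ one_ne_zero)
    refine h₁.existsUnique_image_eq_of_orthogonal h₂ hu₁ hu₂ (ih ?_ ?_ ?_ ?_)
    · rw [Submodule.finrank_orthogonal_span_singleton (n := n) hu₁0,
        Submodule.finrank_orthogonal_span_singleton (n := n) hu₂0]
    · exact h₁.preimage (ℝ ∙ u₁)ᗮ.subtype Subtype.val_injective
    · exact h₂.preimage (ℝ ∙ u₂)ᗮ.subtype Subtype.val_injective
    · exact Submodule.finrank_orthogonal_span_singleton (n := n) hu₁0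

theorem stmt11 {V : Type*} [NormedAddCommGroup V] [InnerProductSpace ℝ V]
    [FiniteDimensional ℝ V] (D₁ D₂ : Set V)
    (h₁ : IsMaxPointedCone D₁) (h₂ : IsMaxPointedCone D₂) :
    ∃! T : V ≃ₗᵢ[ℝ] V, T '' D₁ = D₂ :=
  h₁.existsUnique_linearIsometryEquiv_image_eq rfl h₂
end
end

section
/- Let {X_i}_{i∈I} be a directed family in L_n (directed under inclusion). Then the union X = ⋃_{i∈I} X_i belongs to L_n; that is, there exists a maximal pointed convex cone D in R^{n+1} with X = D ∩ Φ_n^+. Consequently X is the least upper bound of {X_i} in L_n. -/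
open Set

noncomputable section

lemma mem_phiPlus_iff {n : ℕ} {x : EuclideanSpace ℝ (Fin (n + 1))} :
    x ∈ PhiPlus n ↔ ‖x‖ = 1 ∧ ∃ m : Fin (n+1), 0 < x m ∧ ∀ i, m < i → x i = 0 := by
  simp [PhiPlus, sphereN, mem_sphere_zero_iff_norm]

lemma phi_total {n : ℕ} {x : EuclideanSpace ℝ (Fin (n + 1))} (hx : ‖x‖ = 1) :
    x ∈ PhiPlus n ∨ -x ∈ PhiPlus n := by
  have hx0 : x ≠ 0 := by intro h; simp [h] at hx
  obtain ⟨i0, hi0⟩ : ∃ i, x i ≠ 0 := by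
    by_contra h
    push_neg at h
    exact hx0 (by ext i; simp [h i])
  set S := Finset.univ.filter (fun i => x i ≠ 0) with hS
  have hSne : S.Nonempty := ⟨i0, by simp [hS, hi0]⟩
  set m := S.max' hSne with hm
  have hxm : x m ≠ 0 := by have := S.max'_mem hSne; simpa [hS] using this
  have hzero : ∀ i, m < i → x i = 0 := by
    intro i hi
    by_contra h
    exact absurd (S.le_max' i (by simp [hS, h])) (not_le.mpr hi)
  rcases hxm.lt_or_gt with hneg | hpos
  · right
    rw [mem_phiPlus_iff]
    refine ⟨by simpa using hx, m, by simpa using hneg, fun i hi => by simp [hzero i hi]⟩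
  · left
    exact mem_phiPlus_iff.mpr ⟨hx, m, hpos, hzero⟩

lemma phi_disjoint {n : ℕ} {x : EuclideanSpace ℝ (Fin (n + 1))}
    (h1 : x ∈ PhiPlus n) (h2 : -x ∈ PhiPlus n) : False := by
  rw [mem_phiPlus_iff] at h1 h2
  obtain ⟨-, m1, hm1, hz1⟩ := h1
  obtain ⟨-, m2, hm2, hz2⟩ := h2
  have hm2' : x m2 < 0 := by
    have : (0:ℝ) < -(x m2) := by simpa using hm2
    linarith
  rcases lt_trichotomy m1 m2 with h | h | h
  · rw [hz1 m2 h] at hm2'; exact lt_irrefl 0 hm2'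
  · rw [h] at hm1; linarith
  · have h' : (-x) m1 = 0 := hz2 m1 h
    have h'' : x m1 = 0 := by simpa using h'
    rw [h''] at hm1; exact lt_irrefl 0 hm1

theorem stmt19 (n : ℕ) {I : Type*} [Nonempty I]
    (X : I → Set (EuclideanSpace ℝ (Fin (n + 1))))
    (hX : ∀ i, X i ∈ Ln n) (hdir : Directed (· ⊆ ·) X) :
    (∃ D : Set (EuclideanSpace ℝ (Fin (n + 1))), IsMaxPointedCone D ∧
      (⋃ i, X i) = D ∩ PhiPlus n) ∧
    (∀ i, X i ⊆ ⋃ i, X i) ∧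
    (∀ W ∈ Ln n, (∀ i, X i ⊆ W) → (⋃ i, X i) ⊆ W) := by
  classical
  obtain ⟨i₀⟩ := ‹Nonempty I›
  choose Dset hmax hXeq using hX
  -- basic facts about the cones Dset i
  have hzeroD : ∀ i, (0 : EuclideanSpace ℝ (Fin (n+1))) ∈ Dset i := fun i => (hmax i).1.1.1
  have hsmul : ∀ i (r : ℝ), 0 ≤ r → ∀ v ∈ Dset i, r • v ∈ Dset i := fun i => (hmax i).1.1.2
  have hadd : ∀ i, ∀ u ∈ Dset i, ∀ v ∈ Dset i, u + v ∈ Dset i := fun i => (hmax i).1.2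
  have hptd : ∀ i v, v ∈ Dset i → -v ∈ Dset i → v = 0 := by
    intro i v h1 h2
    have : v ∈ Dset i ∩ (-Dset i) := ⟨h1, by simpa [Set.mem_neg] using h2⟩
    rw [(hmax i).2.1] at this
    simpa using this
  have htot : ∀ i v, v ∉ Dset i → -v ∈ Dset i := by
    intro i v h
    have : v ∈ Dset i ∪ (-Dset i) := by rw [(hmax i).2.2]; trivial
    rcases this with h' | h'
    · exact absurd h' h
    · simpa [Set.mem_neg] using h'
  have hnormmem : ∀ i v, v ∈ Dset i → ‖v‖⁻¹ • v ∈ Dset i :=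
    fun i v hv => hsmul i _ (inv_nonneg.mpr (norm_nonneg v)) v hv
  have hXsub : ∀ i, X i ⊆ Dset i := fun i => by rw [hXeq i]; exact inter_subset_left
  have hXphi : ∀ i, X i ⊆ PhiPlus n := fun i => by rw [hXeq i]; exact inter_subset_right
  have hmemX : ∀ i v, v ∈ Dset i → v ∈ PhiPlus n → v ∈ X i := by
    intro i v h1 h2; rw [hXeq i]; exact ⟨h1, h2⟩
  have hunit : ∀ v : EuclideanSpace ℝ (Fin (n+1)), v ≠ 0 → ‖‖v‖⁻¹ • v‖ = 1 := by
    intro v hv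
    rw [norm_smul, norm_inv, norm_norm, inv_mul_cancel₀ (norm_ne_zero_iff.mpr hv)]
  have hrecon : ∀ w : EuclideanSpace ℝ (Fin (n+1)), w ≠ 0 → ‖w‖ • (‖w‖⁻¹ • w) = w := by
    intro w hw
    rw [smul_smul, mul_inv_cancel₀ (norm_ne_zero_iff.mpr hw), one_smul]
  have hfromX : ∀ w : EuclideanSpace ℝ (Fin (n+1)), w ≠ 0 →
      ∀ k, ‖w‖⁻¹ • w ∈ X k → w ∈ Dset k := by
    intro w hw k hk
    have := hsmul k ‖w‖ (norm_nonneg w) _ (hXsub k hk)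
    rwa [hrecon w hw] at this
  have hneg_norm : ∀ w : EuclideanSpace ℝ (Fin (n+1)),
      ‖-w‖⁻¹ • (-w) = -(‖w‖⁻¹ • w) := by
    intro w; rw [norm_neg, smul_neg]
  -- the candidate cone
  set E : Set (EuclideanSpace ℝ (Fin (n+1))) :=
    {w | ∀ i, ∃ j, X i ⊆ X j ∧ w ∈ Dset j} with hEdef
  have hzeroE : (0 : EuclideanSpace ℝ (Fin (n+1))) ∈ E :=
    fun i => ⟨i, subset_rfl, hzeroD i⟩
  -- key dichotomy
  have hdich : ∀ w ∈ E, w ≠ 0 →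
      (∃ a, ‖w‖⁻¹ • w ∈ X a) ∨ (∀ i, w ∈ Dset i) := by
    intro w hw hw0
    rcases phi_total (hunit w hw0) with hp | hm
    · left
      obtain ⟨j, -, hj⟩ := hw i₀
      exact ⟨j, hmemX j _ (hnormmem j w hj) hp⟩
    · right
      intro i
      by_contra hni
      have h1 : -w ∈ Dset i := htot i w hni
      have h1' : -(‖w‖⁻¹ • w) ∈ Dset i := by
        have := hnormmem i (-w) h1
        rwa [hneg_norm] at this
      have h2 : -(‖w‖⁻¹ • w) ∈ X i := hmemX i _ h1' hm
      obtain ⟨j, hij, hj⟩ := hw i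
      have h3 : -(‖w‖⁻¹ • w) ∈ Dset j := hXsub j (hij h2)
      have h4 : ‖w‖⁻¹ • w ∈ Dset j := hnormmem j w hj
      have h5 := hptd j _ h4 h3
      have := hunit w hw0
      rw [h5] at this
      simp at this
  -- E is a convex cone
  have hEsmul : ∀ (r : ℝ), 0 ≤ r → ∀ v ∈ E, r • v ∈ E := by
    intro r hr v hv i
    obtain ⟨j, h1, h2⟩ := hv i
    exact ⟨j, h1, hsmul j r hr v h2⟩
  have hEadd : ∀ u ∈ E, ∀ v ∈ E, u + v ∈ E := by
    intro u hu v hv i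
    by_cases hu0 : u = 0
    · simpa [hu0] using hv i
    by_cases hv0 : v = 0
    · simpa [hv0] using hu i
    rcases hdich u hu hu0 with ⟨a, ha⟩ | hau
    · rcases hdich v hv hv0 with ⟨b, hb⟩ | hbv
      · obtain ⟨k, hk1, hk2⟩ := hdir i a
        obtain ⟨l, hl1, hl2⟩ := hdir k b
        exact ⟨l, hk1.trans hl1,
          hadd l u (hfromX u hu0 l (hl1 (hk2 ha))) v (hfromX v hv0 l (hl2 hb))⟩
      · obtain ⟨k, hk1, hk2⟩ := hdir i a
        exact ⟨k, hk1, hadd k u (hfromX u hu0 k (hk2 ha)) v (hbv k)⟩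
    · rcases hdich v hv hv0 with ⟨b, hb⟩ | hbv
      · obtain ⟨k, hk1, hk2⟩ := hdir i b
        exact ⟨k, hk1, hadd k u (hau k) v (hfromX v hv0 k (hk2 hb))⟩
      · exact ⟨i, subset_rfl, hadd i u (hau i) v (hbv i)⟩
  -- pointedness
  have hEptd : E ∩ (-E) = {0} := by
    ext w
    simp only [Set.mem_inter_iff, Set.mem_neg, Set.mem_singleton_iff]
    constructor
    · rintro ⟨hw, hw'⟩
      by_contra hw0
      have hw0' : -w ≠ 0 := neg_ne_zero.mpr hw0
      rcases hdich w hw hw0 with ⟨a, ha⟩ | hav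
      · rcases hdich (-w) hw' hw0' with ⟨b, hb⟩ | hbv
        · have hb' : -(‖w‖⁻¹ • w) ∈ X b := by rwa [hneg_norm] at hb
          exact phi_disjoint (hXphi a ha) (hXphi b hb')
        · exact hw0 (hptd a w (hfromX w hw0 a ha) (hbv a))
      · rcases hdich (-w) hw' hw0' with ⟨b, hb⟩ | hbv
        · have hb'' : -(‖w‖⁻¹ • w) ∈ X b := by rwa [hneg_norm] at hb
          have h6 := hptd b _ (hnormmem b w (hav b)) (hXsub b hb'')
          have h7 := hunit w hw0
          rw [h6] at h7
          simp at h7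
        · exact hw0 (hptd i₀ w (hav i₀) (hbv i₀))
    · rintro rfl
      exact ⟨hzeroE, by simpa using hzeroE⟩
  -- maximality
  have hEtot : E ∪ (-E) = Set.univ := by
    rw [Set.eq_univ_iff_forall]
    intro w
    by_cases hw : w ∈ E
    · exact Or.inl hw
    right
    rw [Set.mem_neg]
    have hw0 : w ≠ 0 := by rintro rfl; exact hw hzeroE
    have hw' := hw
    simp only [hEdef, Set.mem_setOf_eq, not_forall, not_exists, not_and] at hw'
    obtain ⟨j₀, h0⟩ := hw'
    have h1 : -w ∈ Dset j₀ := htot j₀ w (h0 j₀ subset_rfl)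
    rcases phi_total (hunit (-w) (neg_ne_zero.mpr hw0)) with hp | hm
    · have h2 : ‖-w‖⁻¹ • (-w) ∈ X j₀ := hmemX j₀ _ (hnormmem j₀ _ h1) hp
      intro i
      obtain ⟨k, hk1, hk2⟩ := hdir i j₀
      exact ⟨k, hk1, hfromX (-w) (neg_ne_zero.mpr hw0) k (hk2 h2)⟩
    · intro i
      refine ⟨i, subset_rfl, ?_⟩
      by_contra hni
      have h3 : w ∈ Dset i := by
        have := htot i (-w) hni
        rwa [neg_neg] at this
      have hp' : ‖w‖⁻¹ • w ∈ PhiPlus n := by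
        have h4 : -(‖-w‖⁻¹ • (-w)) ∈ PhiPlus n := hm
        rwa [hneg_norm, neg_neg] at h4
      have h5 : ‖w‖⁻¹ • w ∈ X i := hmemX i _ (hnormmem i w h3) hp'
      obtain ⟨k, hk1, hk2⟩ := hdir i j₀
      exact h0 k hk2 (hfromX w hw0 k (hk1 h5))
  -- the union equals E ∩ PhiPlus
  have hUnion : (⋃ i, X i) = E ∩ PhiPlus n := by
    ext x
    constructor
    · intro hx
      obtain ⟨i, hxi⟩ := Set.mem_iUnion.mp hx
      refine ⟨?_, hXphi i hxi⟩
      intro i'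
      obtain ⟨k, hk1, hk2⟩ := hdir i' i
      exact ⟨k, hk1, hXsub k (hk2 hxi)⟩
    · rintro ⟨hxE, hxP⟩
      obtain ⟨j, -, hj⟩ := hxE i₀
      exact Set.mem_iUnion.mpr ⟨j, hmemX j x hj hxP⟩
  exact ⟨⟨E, ⟨⟨⟨hzeroE, hEsmul⟩, hEadd⟩, hEptd, hEtot⟩, hUnion⟩,
    fun i => Set.subset_iUnion X i,
    fun W _ h => Set.iUnion_subset h⟩
end
end
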